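/- Given an independent set I of size b in a static graph G_I with n vertices, the temporal graph G of the reduction contains a colorful temporal path of length (b+1)(n+1), obtained by concatenating the paths p(V_{i_1}), …, p(V_{i_b}) (for I = {v_{i_1}, …, v_{i_b}} with i_1 < … < i_b) and p(V_{n+1}) via the connecting temporal edges {v_{i_x,n}, v_{i_{x+1},0}, (n+1)i_x} and {v_{i_b,n}, v_{n+1,0}, (n+1)i_b}. -/

import Mathlib

/-!
Every edge leaving `v_{i,x}` carries the timestamp `n(i-1)+i+x`, so along the concatenation
`p(V_{i_1}) ⋯ p(V_{i_b}) p(V_{n+1})` the timestamps increase strictly, which also makes the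
vertices distinct. The connecting edges `{v_{i,n}, v_{j,0}}` exist because `I` is independent,
and two vertices can share a color only through some `c_{i,j}` with `v_i v_j ∈ E_I`, which
independence excludes as well.
-/

/-- A temporal path: distinct vertices joined by temporal edges with
strictly increasing timestamps. -/
structure TemporalPath (V : Type) (τ : Type) [LT τ] (E : V → V → τ → Prop) where
  verts : List V
  times : List τ
  len_eq : verts.length = times.length + 1
  nodup : verts.Nodup
  incr : times.Chain' (· < ·)
  edge : ∀ i (h : i < times.length),
    E (verts.get ⟨i, by omega⟩) (verts.get ⟨i + 1, by omega⟩) (times.get ⟨i, h⟩)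

/-- Colors of the reduction: `a i q` is the color `a_i^q` and `col i j` is the
color `c_{i,j}`; all these colors are pairwise distinct. -/
inductive Color where
  | a : ℕ → ℕ → Color
  | col : ℕ → ℕ → Color
deriving DecidableEq

/-- The coloring of vertex `v_{i,x}` in the reduction from `Max IS`
(adjacency given by `Adj` on vertices `1, …, n`). -/
def reductionColor (n : ℕ) (Adj : ℕ → ℕ → Bool) (i x : ℕ) : Color :=
  if i = n + 1 then Color.a (n + 1) x
  else if x = 0 then Color.a i 0
  else if Adj i x then Color.col (min i x) (max i x)
  else Color.a i x

/-- Temporal edges of the reduction graph `G` on vertices `v_{i,x}`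
(encoded as pairs `(i,x)`): the edges of the path `p(V_i)` at timestamps
`n(i-1)+i+x`, and the connecting edges at timestamps `(n+1)i`. -/
def redE (n : ℕ) (Adj : ℕ → ℕ → Bool) (u v : ℕ × ℕ) (t : ℕ) : Prop :=
  (∃ i x, 1 ≤ i ∧ i ≤ n + 1 ∧ x + 1 ≤ n ∧ u = (i, x) ∧ v = (i, x + 1) ∧
      t = n * (i - 1) + i + x) ∨
  (∃ i z, 1 ≤ i ∧ i < z ∧ z ≤ n ∧ Adj i z = false ∧ u = (i, n) ∧ v = (z, 0) ∧
      t = (n + 1) * i) ∨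
  (∃ i, 1 ≤ i ∧ i ≤ n ∧ u = (i, n) ∧ v = (n + 1, 0) ∧ t = (n + 1) * i)

namespace TemporalPath

variable {V τ : Type} [Preorder τ] {E : V → V → τ → Prop}

def ofIsChain (f : V → τ) (verts : List V) (hne : verts ≠ [])
    (hedge : verts.IsChain (fun u v => E u v (f u)))
    (hlt : verts.IsChain (fun u v => f u < f v)) : TemporalPath V τ E where
  verts := verts
  times := verts.dropLast.map f
  len_eq := by
    have := List.length_pos_iff.2 hne
    simp only [List.length_map, List.length_dropLast]
    omega
  nodup := (((List.isChain_map f).2 hlt).pairwise.nodup).of_map f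
  incr := (List.isChain_map f).2 hlt.dropLast
  edge k hk := by
    simp only [List.length_map, List.length_dropLast] at hk
    simpa [List.getElem_dropLast] using List.isChain_iff_getElem.1 hedge k (by omega)

@[simp]
theorem ofIsChain_verts (f : V → τ) (verts : List V) (hne : verts ≠ [])
    (hedge : verts.IsChain (fun u v => E u v (f u)))
    (hlt : verts.IsChain (fun u v => f u < f v)) :
    (ofIsChain f verts hne hedge hlt).verts = verts := rfl

end TemporalPath

namespace Reduction

variable (n : ℕ) (Adj : ℕ → ℕ → Bool)

/-- The timestamp `n(i-1)+i+x` of the edge leaving `v_{i,x}`; for `x = n` and `i ≥ 1` it is the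
timestamp `(n+1)i` of the connecting edges. -/
def edgeTime (w : ℕ × ℕ) : ℕ := n * (w.1 - 1) + w.1 + w.2

def block (i : ℕ) : List (ℕ × ℕ) := (List.range (n + 1)).map (fun x => (i, x))

/-- `p(V_i)` may be followed by `p(V_j)` in the concatenated path. -/
def Linked (i j : ℕ) : Prop := i < j ∧ (j = n + 1 ∨ j ≤ n ∧ Adj i j = false)

theorem edgeTime_connect {i : ℕ} (hi : 1 ≤ i) : edgeTime n (i, n) = (n + 1) * i := by
  obtain ⟨k, rfl⟩ : ∃ k, i = k + 1 := ⟨i - 1, by omega⟩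
  simp only [edgeTime, Nat.add_sub_cancel]
  ring

variable {n Adj}

theorem redE_step {i x : ℕ} (hi : 1 ≤ i) (hi' : i ≤ n + 1) (hx : x < n) :
    redE n Adj (i, x) (i, x + 1) (edgeTime n (i, x)) :=
  Or.inl ⟨i, x, hi, hi', hx, rfl, rfl, rfl⟩

theorem redE_connect {i j : ℕ} (hi : 1 ≤ i) (hij : Linked n Adj i j) :
    redE n Adj (i, n) (j, 0) (edgeTime n (i, n)) := by
  rw [edgeTime_connect n hi]
  obtain ⟨hlt, rfl | ⟨hj, hadj⟩⟩ := hij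
  · exact Or.inr (Or.inr ⟨i, hi, by omega, rfl, rfl, rfl⟩)
  · exact Or.inr (Or.inl ⟨i, j, hi, hlt, hj, hadj, rfl, rfl, rfl⟩)

theorem edgeTime_lt_of_redE {u v : ℕ × ℕ} (h : redE n Adj u v (edgeTime n u)) :
    edgeTime n u < edgeTime n v := by
  rcases h with ⟨i, x, -, -, -, rfl, rfl, -⟩ | ⟨i, z, hi, hiz, -, -, rfl, rfl, -⟩ |
      ⟨i, hi, hin, rfl, rfl, -⟩
  · simp [edgeTime]
  · -- the leaving time `(n+1)i` of `v_{i,n}` precedes the first time `(n+1)(z-1)+1` of `p(V_z)`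
    have : n * i ≤ n * (z - 1) := Nat.mul_le_mul_left n (by omega)
    rw [edgeTime_connect n hi]
    simp only [edgeTime]
    nlinarith
  · have : n * i ≤ n * n := Nat.mul_le_mul_left n hin
    rw [edgeTime_connect n hi]
    simp only [edgeTime, Nat.add_sub_cancel]
    nlinarith

theorem isChain_block {i : ℕ} (hi : 1 ≤ i) (hi' : i ≤ n + 1) :
    (block n i).IsChain (fun u v => redE n Adj u v (edgeTime n u)) := by
  rw [block, List.isChain_map, List.isChain_range_succ]
  exact fun x hx => redE_step hi hi' hx

theorem isChain_flatMap_block {L : List ℕ} (hL : ∀ i ∈ L, 1 ≤ i ∧ i ≤ n + 1)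
    (hlink : L.IsChain (Linked n Adj)) :
    (L.flatMap (block n)).IsChain (fun u v => redE n Adj u v (edgeTime n u)) := by
  rw [List.flatMap_def, List.isChain_flatten (by simp [block])]
  refine ⟨?_, ?_⟩
  · simp only [List.mem_map]
    rintro _ ⟨i, hiL, rfl⟩
    exact isChain_block (hL i hiL).1 (hL i hiL).2
  · rw [List.isChain_map]
    refine hlink.imp_of_mem_imp (fun i j hiL _ hij => ?_)
    simpa [block, List.getLast?_range, List.head?_range] using redE_connect (hL i hiL).1 hij

theorem eq_of_reductionColor_eq_a {i x p q : ℕ} (h : reductionColor n Adj i x = Color.a p q) :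
    i = p ∧ x = q := by
  unfold reductionColor at h
  grind

theorem adj_of_reductionColor_eq_col {i x p q : ℕ}
    (h : reductionColor n Adj i x = Color.col p q) :
    i ≠ n + 1 ∧ Adj i x = true ∧ min i x = p ∧ max i x = q := by
  unfold reductionColor at h
  grind

/-- Colors repeat across blocks only through a shared `c_{i,j}`, i.e. between the blocks of two
adjacent vertices of `G_I`. -/
theorem reductionColor_injOn {S : Set ℕ} (hS : S.Pairwise (fun i j => Adj i j = false)) :
    Set.InjOn (fun w : ℕ × ℕ => reductionColor n Adj w.1 w.2) {w | w.1 = n + 1 ∨ w.1 ∈ S} := by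
  rintro ⟨i, x⟩ hi ⟨j, y⟩ hj h
  simp only [Set.mem_ofPred_eq] at hi hj h
  rcases hc : reductionColor n Adj i x with ⟨p, q⟩ | ⟨p, q⟩ <;> rw [hc] at h
  · obtain ⟨rfl, rfl⟩ := eq_of_reductionColor_eq_a hc
    obtain ⟨rfl, rfl⟩ := eq_of_reductionColor_eq_a h.symm
    rfl
  · obtain ⟨hin, hix, rfl, rfl⟩ := adj_of_reductionColor_eq_col hc
    obtain ⟨hjn, -, hmin, hmax⟩ := adj_of_reductionColor_eq_col h.symm
    rcases (by omega : i = j ∧ x = y ∨ i = y ∧ x = j ∧ i ≠ j) with ⟨rfl, rfl⟩ | ⟨rfl, rfl, hne⟩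
    · rfl
    · exact absurd (hS (hi.resolve_left hin) (hj.resolve_left hjn) hne) (by simp [hix])

theorem mem_flatMap_block {L : List ℕ} {w : ℕ × ℕ} :
    w ∈ L.flatMap (block n) ↔ w.1 ∈ L ∧ w.2 ≤ n := by
  rcases w with ⟨i, x⟩
  simp [block]

theorem length_flatMap_block (L : List ℕ) : (L.flatMap (block n)).length = L.length * (n + 1) := by
  simp [List.length_flatMap, block]

theorem isChain_linked_sort_append {I : Finset ℕ} (hI : ∀ i ∈ I, 1 ≤ i ∧ i ≤ n)
    (hind : ∀ i ∈ I, ∀ j ∈ I, i ≠ j → Adj i j = false) :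
    (I.sort (· ≤ ·) ++ [n + 1]).IsChain (Linked n Adj) := by
  refine List.Pairwise.isChain (List.pairwise_append.2 ⟨?_, by simp, ?_⟩)
  · refine (Finset.sortedLT_sort I).pairwise.imp_of_mem (fun {i j} hi hj hij => ?_)
    rw [Finset.mem_sort] at hi hj
    exact ⟨hij, Or.inr ⟨(hI j hj).2, hind i hi j hj hij.ne⟩⟩
  · simp only [List.mem_singleton, Finset.mem_sort]
    rintro i hi _ rfl
    exact ⟨by linarith [(hI i hi).2], Or.inl rfl⟩

end Reduction

open Reduction in
theorem independent_set_to_colorful_path_general (n : ℕ)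
    (Adj : ℕ → ℕ → Bool)
    (I : Finset ℕ) (hI : ∀ i ∈ I, 1 ≤ i ∧ i ≤ n)
    (hind : ∀ i ∈ I, ∀ j ∈ I, i ≠ j → Adj i j = false) :
    ∃ p : TemporalPath (ℕ × ℕ) ℕ
        (fun u v t => redE n Adj u v t ∨ redE n Adj v u t),
      p.verts = (I.sort (· ≤ ·) ++ [n + 1]).flatMap
        (fun i => (List.range (n + 1)).map (fun x => (i, x))) ∧
      (p.verts.map (fun w => reductionColor n Adj w.1 w.2)).Nodup ∧
      p.verts.length = (I.card + 1) * (n + 1) := by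
  set L := I.sort (· ≤ ·) ++ [n + 1]
  have hL : ∀ i ∈ L, (1 ≤ i ∧ i ≤ n + 1) ∧ (i = n + 1 ∨ i ∈ I) := by
    intro i hi
    rcases List.mem_append.1 hi with hi | hi
    · rw [Finset.mem_sort] at hi
      exact ⟨⟨(hI i hi).1, by linarith [(hI i hi).2]⟩, Or.inr hi⟩
    · rw [List.mem_singleton] at hi
      exact ⟨⟨by omega, by omega⟩, Or.inl hi⟩
  have hlen : (L.flatMap (block n)).length = (I.card + 1) * (n + 1) := by
    rw [length_flatMap_block]
    simp [L]
  have hchain := isChain_flatMap_block (Adj := Adj) (fun i hi => (hL i hi).1)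
    (isChain_linked_sort_append hI hind)
  let p : TemporalPath (ℕ × ℕ) ℕ (fun u v t => redE n Adj u v t ∨ redE n Adj v u t) :=
    .ofIsChain (edgeTime n) (L.flatMap (block n))
      (List.ne_nil_of_length_pos (by rw [hlen]; positivity))
      (hchain.imp fun _ _ => Or.inl) (hchain.imp fun _ _ => edgeTime_lt_of_redE)
  refine ⟨p, rfl, List.Nodup.map_on (fun u hu v hv huv => ?_) p.nodup, hlen⟩
  rw [TemporalPath.ofIsChain_verts, mem_flatMap_block] at hu hv
  exact reductionColor_injOn (S := I) (fun i hi j hj => hind i hi j hj)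
    (hL u.1 hu.1).2 (hL v.1 hv.1).2 huv

/-- Given an independent set `I` of size `b` in `G_I`, the reduction graph
contains a colorful temporal path of length `(b+1)(n+1)`: the concatenation of
the paths `p(V_i)` for `i ∈ I` (in increasing order) and `p(V_{n+1})`. -/
theorem independent_set_to_colorful_path (n : ℕ) (hn : 1 ≤ n)
    (Adj : ℕ → ℕ → Bool)
    (hsym : ∀ i j, Adj i j = Adj j i) (hirr : ∀ i, Adj i i = false)
    (I : Finset ℕ) (hI : ∀ i ∈ I, 1 ≤ i ∧ i ≤ n)
    (hind : ∀ i ∈ I, ∀ j ∈ I, i ≠ j → Adj i j = false) :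
    ∃ p : TemporalPath (ℕ × ℕ) ℕ
        (fun u v t => redE n Adj u v t ∨ redE n Adj v u t),
      p.verts = (I.sort (· ≤ ·) ++ [n + 1]).flatMap
        (fun i => (List.range (n + 1)).map (fun x => (i, x))) ∧
      (p.verts.map (fun w => reductionColor n Adj w.1 w.2)).Nodup ∧
      p.verts.length = (I.card + 1) * (n + 1) :=
  independent_set_to_colorful_path_general n Adj I hI hind
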